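/- Let P be a probability measure on ℝ^p and let c : [0,1]^p → ℝ be Lebesgue-integrable. Suppose f ∈ L²(P) satisfies, for P-almost every x, f(x) = ∫_{[0,1]^p} c(t)·h_t(x) dt, where h_t(x) = ∏_{j=1}^p 1(t_j ≤ x_j). Then for every ε > 0 there exist a finite index set K, points t_k ∈ [0,1]^p and coefficients λ_k ∈ ℝ for k ∈ K, such that Σ_{k∈K} |λ_k| ≤ ‖c‖_{L¹([0,1]^p)} and ‖f − Σ_{k∈K} λ_k h_{t_k}‖_{L²(P)} < ε. In other words, f lies in the L²(P)-closure of the set of finite signed combinations of separable indicator products whose coefficient ℓ¹-norm is at most the L¹-norm of the mixed derivative density c. -/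

import Mathlib

/-!
Round each `t ∈ [0,1]^p` down to the grid of mesh `1/N` and integrate:
`f_N(x) = ∫ c(t) h_{⌊Nt⌋/N}(x) dt` is a finite combination `∑_k λ_k h_{t_k}` whose coefficients
`λ_k = ∫_{cell k} c` satisfy `∑ |λ_k| ≤ ‖c‖₁`. Off the Lebesgue-null hyperplanes `t_j = x_j`,
rounding eventually does not change `h_t(x)`, so `f_N → f` pointwise by dominated convergence.
As `|f_N| ≤ ‖c‖₁`, bounded convergence on the finite measure `P` upgrades this to `L²(P)`.
-/

open MeasureTheory

/-- The separable indicator product `h_t(x) = ∏_j 1(t_j ≤ x_j)`. -/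
noncomputable def sepIndicator (p : ℕ) (t x : Fin p → ℝ) : ℝ :=
  ∏ j, if t j ≤ x j then (1 : ℝ) else 0

/-- The unit cube `[0,1]^p`. -/
def unitBox (p : ℕ) : Set (Fin p → ℝ) := Set.univ.pi fun _ => Set.Icc (0 : ℝ) 1

open Filter Topology

section FinitePartition

variable {α κ : Type*} [MeasurableSpace α] [Fintype κ] [MeasurableSpace κ]
  [MeasurableSingletonClass κ] {μ : Measure α} {s : Set α} {r : α → κ}

theorem setIntegral_mul_comp_eq_sum {c : α → ℝ} (hs : MeasurableSet s) (hr : Measurable r)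
    (hc : IntegrableOn c s μ) (φ : κ → ℝ) :
    ∫ t in s, c t * φ (r t) ∂μ = ∑ k, (∫ t in s ∩ r ⁻¹' {k}, c t ∂μ) * φ k := by
  have hpiece : ∀ k, MeasurableSet (s ∩ r ⁻¹' {k}) := fun k =>
    hs.inter (hr (measurableSet_singleton k))
  have hcomp : ∀ k, Set.EqOn (fun t => c t * φ k) (fun t => c t * φ (r t)) (s ∩ r ⁻¹' {k}) :=
    fun k t ht => by simp only [show r t = k from ht.2]
  calc ∫ t in s, c t * φ (r t) ∂μ
      = ∫ t in ⋃ k ∈ (Finset.univ : Finset κ), s ∩ r ⁻¹' {k}, c t * φ (r t) ∂μ := by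
        congr; ext t; simp
    _ = ∑ k, ∫ t in s ∩ r ⁻¹' {k}, c t * φ (r t) ∂μ := by
        refine integral_biUnion_finset _ (fun k _ => hpiece k) ?_ fun k _ => ?_
        · exact fun k _ l _ hkl => Set.disjoint_left.2 fun t htk htl => hkl (htk.2.symm.trans htl.2)
        · exact IntegrableOn.congr_fun ((hc.mono_set Set.inter_subset_left).mul_const (φ k))
            (hcomp k) (hpiece k)
    _ = ∑ k, (∫ t in s ∩ r ⁻¹' {k}, c t ∂μ) * φ k := by
        refine Finset.sum_congr rfl fun k _ => ?_
        rw [← integral_mul_const]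
        exact (setIntegral_congr_fun (hpiece k) (hcomp k)).symm

theorem sum_abs_setIntegral_preimage_le {c : α → ℝ} (hs : MeasurableSet s) (hr : Measurable r)
    (hc : IntegrableOn c s μ) :
    ∑ k, |∫ t in s ∩ r ⁻¹' {k}, c t ∂μ| ≤ ∫ t in s, |c t| ∂μ :=
  calc ∑ k, |∫ t in s ∩ r ⁻¹' {k}, c t ∂μ|
      ≤ ∑ k, ∫ t in s ∩ r ⁻¹' {k}, |c t| ∂μ :=
        Finset.sum_le_sum fun _ _ => abs_integral_le_integral_abs
    _ = ∫ t in s, |c t| ∂μ := by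
        simpa using (setIntegral_mul_comp_eq_sum hs hr hc.abs fun _ => 1).symm

end FinitePartition

theorem abs_setIntegral_mul_le {α : Type*} [MeasurableSpace α] {μ : Measure α} {s : Set α}
    {c φ : α → ℝ} (hc : IntegrableOn c s μ) (hφ : ∀ t, |φ t| ≤ 1) :
    |∫ t in s, c t * φ t ∂μ| ≤ ∫ t in s, |c t| ∂μ :=
  norm_integral_le_of_norm_le (f := fun t => c t * φ t) hc.abs <| ae_of_all _ fun t => by
    simpa [abs_mul] using mul_le_mul_of_nonneg_left (hφ t) (abs_nonneg (c t))

theorem tendsto_eLpNorm_zero_of_ae_tendsto_of_ae_bound {α E : Type*} [MeasurableSpace α]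
    [NormedAddCommGroup E] {μ : Measure α} [IsFiniteMeasure μ] {q : ENNReal} (hq0 : q ≠ 0)
    (hq : q ≠ ⊤) {F : ℕ → α → E} {C : ℝ} (hF : ∀ n, AEStronglyMeasurable (F n) μ)
    (hbound : ∀ n, ∀ᵐ x ∂μ, ‖F n x‖ ≤ C)
    (hlim : ∀ᵐ x ∂μ, Tendsto (fun n => F n x) atTop (𝓝 0)) :
    Tendsto (fun n => eLpNorm (F n) q μ) atTop (𝓝 0) := by
  have hq' : 0 < q.toReal := ENNReal.toReal_pos hq0 hq
  have hint : Tendsto (fun n => ∫⁻ x, ‖F n x‖ₑ ^ q.toReal ∂μ) atTop (𝓝 0) := by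
    simpa [hq'] using tendsto_lintegral_of_dominated_convergence'
      (F := fun n x => ‖F n x‖ₑ ^ q.toReal) (f := fun _ => 0)
      (fun _ => ENNReal.ofReal C ^ q.toReal)
      (fun n => (hF n).enorm.pow_const _)
      (fun n => (hbound n).mono fun x hx => by
        refine ENNReal.rpow_le_rpow ?_ hq'.le
        rw [← ofReal_norm]
        exact ENNReal.ofReal_le_ofReal hx)
      (by simp [lintegral_const, ENNReal.mul_eq_top, hq'.le, measure_ne_top])
      (hlim.mono fun x hx => by
        simpa [hq'] using (hx.enorm.ennrpow_const q.toReal))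
  simp_rw [eLpNorm_eq_lintegral_rpow_enorm_toReal hq0 hq]
  simpa [hq'] using hint.ennrpow_const (1 / q.toReal)

section SepIndicator

variable {p : ℕ}

theorem sepIndicator_eq_indicator (t x : Fin p → ℝ) :
    sepIndicator p t x = (Set.Ici t).indicator 1 x := by
  simp [sepIndicator, Finset.prod_boole, Set.indicator, Pi.le_def]

theorem abs_sepIndicator_le_one (t x : Fin p → ℝ) : |sepIndicator p t x| ≤ 1 := by
  rw [sepIndicator_eq_indicator]
  by_cases h : x ∈ Set.Ici t <;> simp [h]

theorem measurable_sepIndicator (t : Fin p → ℝ) : Measurable (sepIndicator p t) := by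
  rw [show sepIndicator p t = (Set.Ici t).indicator 1 from funext (sepIndicator_eq_indicator t)]
  exact measurable_one.indicator measurableSet_Ici

theorem continuousAt_sepIndicator {t x : Fin p → ℝ} (hx : ∀ j, t j ≠ x j) :
    ContinuousAt (fun s => sepIndicator p s x) t := by
  have hloc : ∀ᶠ s in 𝓝 t, ∀ j, (s j ≤ x j ↔ t j ≤ x j) := by
    refine eventually_all.2 fun j => ?_
    have hcont := (continuous_apply j).continuousAt (x := t)
    rcases (hx j).lt_or_gt with h | h
    · filter_upwards [hcont.eventually (gt_mem_nhds h)] with s hs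
      simp [hs.le, h.le]
    · filter_upwards [hcont.eventually (lt_mem_nhds h)] with s hs
      simp [not_le.2 hs, not_le.2 h]
  exact (continuousAt_const (y := sepIndicator p t x)).congr
    (hloc.mono fun s hs => by simp only [sepIndicator, hs])

end SepIndicator

section Grid

variable {p : ℕ}

theorem measurableSet_unitBox : MeasurableSet (unitBox p) :=
  MeasurableSet.univ_pi fun _ => measurableSet_Icc

/-- `Fin.ofNat` reduces modulo `N + 1`, which does nothing on `unitBox p`. -/
noncomputable def gridIndex (N : ℕ) (t : Fin p → ℝ) : Fin p → Fin (N + 1) :=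
  fun j => Fin.ofNat (N + 1) ⌊t j * N⌋₊

noncomputable def gridPoint (N : ℕ) (k : Fin p → Fin (N + 1)) : Fin p → ℝ :=
  fun j => (k j : ℝ) / N

theorem measurable_gridIndex (N : ℕ) : Measurable (gridIndex (p := p) N) :=
  measurable_pi_lambda _ fun j =>
    (measurable_from_nat (f := Fin.ofNat (N + 1))).comp
      ((measurable_pi_apply j).mul_const _).nat_floor

theorem gridPoint_mem_unitBox (N : ℕ) (k : Fin p → Fin (N + 1)) : gridPoint N k ∈ unitBox p :=
  fun j _ => ⟨div_nonneg (Nat.cast_nonneg _) N.cast_nonneg,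
    div_le_one_of_le₀ (by exact_mod_cast Fin.is_le (k j)) N.cast_nonneg⟩

theorem tendsto_gridPoint_gridIndex {t : Fin p → ℝ} (ht : t ∈ unitBox p) :
    Tendsto (fun N => gridPoint N (gridIndex N t)) atTop (𝓝 t) := by
  refine tendsto_pi_nhds.2 fun j => ?_
  obtain ⟨ht0, ht1⟩ := ht j (Set.mem_univ j)
  have hfloor : ∀ N : ℕ, ⌊t j * N⌋₊ ≤ N := fun N =>
    Nat.floor_le_of_le (by simpa using mul_le_of_le_one_left N.cast_nonneg ht1)
  have heq : (fun N => gridPoint N (gridIndex N t) j) = fun N : ℕ => (⌊t j * N⌋₊ : ℝ) / N := by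
    ext N
    simp [gridPoint, gridIndex, Nat.mod_eq_of_lt (Nat.lt_succ_of_le (hfloor N))]
  rw [heq]
  exact (tendsto_nat_floor_mul_div_atTop ht0).comp tendsto_natCast_atTop_atTop

end Grid

section GridApprox

variable {p : ℕ} {c : (Fin p → ℝ) → ℝ}

noncomputable def gridCoeff (c : (Fin p → ℝ) → ℝ) (N : ℕ) (k : Fin p → Fin (N + 1)) : ℝ :=
  ∫ t in unitBox p ∩ gridIndex N ⁻¹' {k}, c t

noncomputable def gridApprox (c : (Fin p → ℝ) → ℝ) (N : ℕ) (x : Fin p → ℝ) : ℝ :=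
  ∑ k, gridCoeff c N k * sepIndicator p (gridPoint N k) x

theorem sum_abs_gridCoeff_le (hc : IntegrableOn c (unitBox p)) (N : ℕ) :
    ∑ k, |gridCoeff c N k| ≤ ∫ t in unitBox p, |c t| :=
  sum_abs_setIntegral_preimage_le measurableSet_unitBox (measurable_gridIndex N) hc

theorem measurable_gridApprox (N : ℕ) : Measurable (gridApprox c N) :=
  Finset.measurable_sum _ fun _ _ => (measurable_sepIndicator _).const_mul _

theorem gridApprox_eq_setIntegral (hc : IntegrableOn c (unitBox p)) (N : ℕ) (x : Fin p → ℝ) :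
    gridApprox c N x = ∫ t in unitBox p, c t * sepIndicator p (gridPoint N (gridIndex N t)) x :=
  (setIntegral_mul_comp_eq_sum measurableSet_unitBox (measurable_gridIndex N) hc _).symm

theorem abs_gridApprox_le (hc : IntegrableOn c (unitBox p)) (N : ℕ) (x : Fin p → ℝ) :
    |gridApprox c N x| ≤ ∫ t in unitBox p, |c t| := by
  rw [gridApprox_eq_setIntegral hc]
  exact abs_setIntegral_mul_le hc fun t => abs_sepIndicator_le_one _ x

theorem tendsto_gridApprox (hc : IntegrableOn c (unitBox p)) (x : Fin p → ℝ) :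
    Tendsto (fun N => gridApprox c N x) atTop
      (𝓝 (∫ t in unitBox p, c t * sepIndicator p t x)) := by
  simp_rw [gridApprox_eq_setIntegral hc]
  refine tendsto_integral_of_dominated_convergence (fun t => |c t|) (fun N => ?_) hc.abs
    (fun N => ae_of_all _ fun t => ?_) ?_
  · exact hc.1.mul ((measurable_of_countable fun k => sepIndicator p (gridPoint N k) x).comp
      (measurable_gridIndex N)).aestronglyMeasurable
  · simpa [abs_mul] using
      mul_le_mul_of_nonneg_left (abs_sepIndicator_le_one _ x) (abs_nonneg (c t))
  · have hoff : ∀ᵐ t ∂(volume : Measure (Fin p → ℝ)), ∀ j, t j ≠ x j :=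
      ae_all_iff.2 fun j => by
        simpa only [volume_pi] using Measure.ae_eval_ne (fun _ => (volume : Measure ℝ)) j (x j)
    filter_upwards [ae_restrict_mem measurableSet_unitBox, ae_restrict_of_ae hoff] with t ht hne
    exact ((continuousAt_sepIndicator hne).tendsto.comp
      (tendsto_gridPoint_gridIndex ht)).const_mul (c t)

theorem tendsto_eLpNorm_sub_gridApprox {P : Measure (Fin p → ℝ)} [IsFiniteMeasure P]
    (hc : IntegrableOn c (unitBox p)) {f : (Fin p → ℝ) → ℝ} (hfm : AEStronglyMeasurable f P)
    (hf : ∀ᵐ x ∂P, f x = ∫ t in unitBox p, c t * sepIndicator p t x) :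
    Tendsto (fun N => eLpNorm (fun x => f x - gridApprox c N x) 2 P) atTop (𝓝 0) := by
  set I := ∫ t in unitBox p, |c t|
  refine tendsto_eLpNorm_zero_of_ae_tendsto_of_ae_bound two_ne_zero ENNReal.ofNat_ne_top
    (C := I + I) (fun N => hfm.sub (measurable_gridApprox N).aestronglyMeasurable)
    (fun N => hf.mono fun x hx => ?_) (hf.mono fun x hx => ?_)
  · have hlim : |∫ t in unitBox p, c t * sepIndicator p t x| ≤ I :=
      le_of_tendsto' (tendsto_gridApprox hc x).abs fun N => abs_gridApprox_le hc N x
    rw [Real.norm_eq_abs, hx]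
    exact (abs_sub _ _).trans (add_le_add hlim (abs_gridApprox_le hc N x))
  · simpa [hx] using (tendsto_gridApprox hc x).const_sub (f x)

end GridApprox

/-- **Variation-class certificate.** If `f ∈ L²(P)` satisfies the anchored
representation `f(x) = ∫_{[0,1]^p} c(t) h_t(x) dt` for `P`-a.e. `x`, with
`c ∈ L¹([0,1]^p)`, then for every `ε > 0` there is a finite signed combination
`Σ_k λ_k h_{t_k}` of separable indicator products, with points
`t_k ∈ [0,1]^p` and `Σ_k |λ_k| ≤ ‖c‖_{L¹([0,1]^p)}`, that approximates `f` in
`L²(P)`-norm within `ε`. -/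
theorem variation_class_certificate
    (p : ℕ) (P : Measure (Fin p → ℝ)) [IsProbabilityMeasure P]
    (c : (Fin p → ℝ) → ℝ)
    (hc : IntegrableOn c (unitBox p) volume)
    (f : (Fin p → ℝ) → ℝ)
    (hf2 : MemLp f 2 P)
    (hf : ∀ᵐ x ∂P, f x = ∫ t in unitBox p, c t * sepIndicator p t x ∂volume) :
    ∀ ε > (0 : ℝ), ∃ (n : ℕ) (t : Fin n → Fin p → ℝ) (lam : Fin n → ℝ),
      (∀ k, t k ∈ unitBox p) ∧
      (∑ k, |lam k|) ≤ (∫ u in unitBox p, |c u| ∂volume) ∧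
      eLpNorm (fun x => f x - ∑ k, lam k * sepIndicator p (t k) x) 2 P
        < ENNReal.ofReal ε := by
  intro ε hε
  obtain ⟨N, hN⟩ := ((tendsto_eLpNorm_sub_gridApprox hc hf2.1 hf).eventually_lt_const
    (ENNReal.ofReal_pos.2 hε)).exists
  let e := (Fintype.equivFin (Fin p → Fin (N + 1))).symm
  refine ⟨_, fun m => gridPoint N (e m), fun m => gridCoeff c N (e m),
    fun m => gridPoint_mem_unitBox N (e m), ?_, ?_⟩
  · rw [e.sum_comp fun k => |gridCoeff c N k|]
    exact sum_abs_gridCoeff_le hc N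
  · have hsum : ∀ x, ∑ m, gridCoeff c N (e m) * sepIndicator p (gridPoint N (e m)) x
        = gridApprox c N x := fun x => e.sum_comp fun k => gridCoeff c N k * sepIndicator p _ x
    simpa only [hsum] using hN
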